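/- For every $a\in\mathbb R$, $U_N(a)=\widetilde F_N^{-1}(V_N(a))$, where $\widetilde F_N$ is the step function on $[0,1]$ with $\widetilde F_N(\overline x_k)=F_N(\overline x_k)$ for all $k=0,\dots,K$ and constant on each $[\overline x_{k-1},\overline x_k)$, $\widetilde F_N^{-1}(t)=\inf\{x\in[0,1]:\widetilde F_N(x)\ge t\}$, and $V_N(a)=\mathrm{argmax}_{u\in\{\widetilde F_N(\overline x_0),\dots,\widetilde F_N(\overline x_K)\}}\{\Lambda_N\circ\widetilde F_N^{-1}(u)-au\}$ (greatest maximizer). -/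

import Mathlib

open MeasureTheory ProbabilityTheory Filter Set ENNReal NNReal

noncomputable section

/-- The greatest location of the maximum of `f` over `s ⊆ ℝ` (`sSup` of the set of maximizers). -/
def argmaxOn (s : Set ℝ) (f : ℝ → ℝ) : ℝ :=
  sSup {u | u ∈ s ∧ ∀ v ∈ s, f v ≤ f u}

/-- The grid `{k/K : k = 0,…,K}`. -/
def grid (K : ℕ) : Set ℝ := {u : ℝ | ∃ k : ℕ, k ≤ K ∧ u = (k : ℝ) / (K : ℝ)}

/-- Empirical distribution function `F_N` of `X_1,…,X_N`. -/
def empCDF (N : ℕ) (X : ℕ → ℝ) (x : ℝ) : ℝ :=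
  (N : ℝ)⁻¹ * ∑ i ∈ Finset.range N, (if X i ≤ x then (1 : ℝ) else 0)

/-- The process `Λ_N(x) = N⁻¹ ∑ Y_i 1{X_i ≤ x}`. -/
def empLam (N : ℕ) (X Y : ℕ → ℝ) (x : ℝ) : ℝ :=
  (N : ℝ)⁻¹ * ∑ i ∈ Finset.range N, (if X i ≤ x then Y i else 0)

/-- The inverse isotonic estimator `U_N(a)`: greatest maximizer of `Λ_N - a F_N` over the grid. -/
def UN (N K : ℕ) (X Y : ℕ → ℝ) (a : ℝ) : ℝ :=
  argmaxOn (grid K) (fun u => empLam N X Y u - a * empCDF N X u)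

/-- Generalized inverse of a nonincreasing function `f` on `[0,1]`: the greatest `t ∈ [0,1]`
with `f t ≥ a` (with `sSup ∅ = 0`, so the conventions `g a = 0` for `a > f 0` and
`g a = 1` for `a < f 1` hold automatically for nonincreasing `f`). -/
def genInv (f : ℝ → ℝ) (a : ℝ) : ℝ :=
  sSup {t | t ∈ Icc (0:ℝ) 1 ∧ a ≤ f t}

/-- The mixture distribution function `F_X = ∑_j (n_j/N) F_{Xj}`, i.e. the average of the
distribution functions of the individual covariates. -/
def FXbar {Ω : Type} [MeasurableSpace Ω] (P : Measure Ω) (N : ℕ) (X : ℕ → Ω → ℝ) (x : ℝ) : ℝ :=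
  (N : ℝ)⁻¹ * ∑ i ∈ Finset.range N, (P {ω | X i ω ≤ x}).toReal

/-- Number of observations (among the first `N`) belonging to sample `j`. -/
def nsz (N : ℕ) (sampleOf : ℕ → ℕ) (j : ℕ) : ℕ :=
  ((Finset.range N).filter fun i => sampleOf i = j).card

/-- `N·w_k`: number of covariates in bin `I_k = ((k-1)/K, k/K]`. -/
def binCnt (N K : ℕ) (X : ℕ → ℝ) (k : ℕ) : ℝ :=
  ∑ i ∈ Finset.range N, (if ((k : ℝ) - 1) / K < X i ∧ X i ≤ (k : ℝ) / K then (1:ℝ) else 0)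

def binSum (N K : ℕ) (X Y : ℕ → ℝ) (k : ℕ) : ℝ :=
  ∑ i ∈ Finset.range N, (if ((k : ℝ) - 1) / K < X i ∧ X i ≤ (k : ℝ) / K then Y i else 0)

/-- The weighted least squares criterion `∑_k w_k (ȳ_k - h_k)²`. -/
def isoObj (N K : ℕ) (X Y : ℕ → ℝ) (h : ℕ → ℝ) : ℝ :=
  ∑ k ∈ Finset.Icc 1 K, (binCnt N K X k / N) * (binSum N K X Y k / binCnt N K X k - h k) ^ 2

/-- `yhat` is a nonincreasing minimizer of the weighted least squares criterion over
nonincreasing vectors (the characterization of the isotonized regressogram `ŷ`). -/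
def IsIsoMin (N K : ℕ) (X Y : ℕ → ℝ) (yhat : ℕ → ℝ) : Prop :=
  (∀ k l, 1 ≤ k → k ≤ l → l ≤ K → yhat l ≤ yhat k) ∧
  ∀ h : ℕ → ℝ, (∀ k l, 1 ≤ k → k ≤ l → l ≤ K → h l ≤ h k) →
    isoObj N K X Y yhat ≤ isoObj N K X Y h

/-- Index `k` with `t ∈ ((k-1)/K, k/K]` (and `k = 1` for `t ≤ 1/K`): the left-continuous
piecewise-constant estimator `μ̂_N` satisfies `μ̂_N(t) = ŷ_{binIdx K t}`. -/
def binIdx (K : ℕ) (t : ℝ) : ℕ := max 1 ⌈(K : ℝ) * t⌉₊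

/-- The step process `Λ_N` extended to `[0,1]`, constant on each `[x̄_{k-1}, x̄_k)`. -/
def LamStep (N K : ℕ) (X Y : ℕ → ℝ) (x : ℝ) : ℝ :=
  empLam N X Y ((⌊(K : ℝ) * x⌋ : ℝ) / K)

/-- The step function `F̃_N`, constant on each `[x̄_{k-1}, x̄_k)`, with `F̃_N(x̄_k) = F_N(x̄_k)`. -/
def tilF (N K : ℕ) (X : ℕ → ℝ) (x : ℝ) : ℝ :=
  empCDF N X ((⌊(K : ℝ) * x⌋ : ℝ) / K)

/-- `F̃_N⁻¹(t) = inf{x ∈ [0,1] : F̃_N(x) ≥ t}`. -/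
def tilFinv (N K : ℕ) (X : ℕ → ℝ) (t : ℝ) : ℝ :=
  sInf {x | x ∈ Icc (0:ℝ) 1 ∧ t ≤ tilF N K X x}

/-- `V_N(a)`: greatest maximizer of `u ↦ Λ_N(F̃_N⁻¹(u)) - a u` over `{F̃_N(x̄_0),…,F̃_N(x̄_K)}`. -/
def VN (N K : ℕ) (X Y : ℕ → ℝ) (a : ℝ) : ℝ :=
  argmaxOn {u | ∃ k : ℕ, k ≤ K ∧ u = tilF N K X ((k : ℝ) / K)}
    (fun u => LamStep N K X Y (tilFinv N K X u) - a * u)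

/-- The centered process `M_N(u) = N⁻¹ ∑ ε_i 1{X_i ≤ u}`, `ε_i = Y_i - μ(X_i)`. -/
def MNproc {Ω : Type} (N : ℕ) (μreg : ℝ → ℝ) (X Y : ℕ → Ω → ℝ) (u : ℝ) (ω : Ω) : ℝ :=
  (N : ℝ)⁻¹ * ∑ i ∈ Finset.range N, (Y i ω - μreg (X i ω)) * (if X i ω ≤ u then (1:ℝ) else 0)

/-! Transporting a finite maximization problem along a map that is monotone on its domain carries
the greatest maximizer to the greatest maximizer. Along `F_N`, which is monotone, the problem
defining `U_N(a)` becomes the one defining `V_N(a)`: every bin is nonempty, so `F_N` jumps at each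
grid point and `F̃_N⁻¹ ∘ F_N` is the identity on the grid. Hence `V_N(a) = F_N(U_N(a))` and
`F̃_N⁻¹(V_N(a)) = U_N(a)`. -/

section ArgmaxOn

variable {s : Set ℝ} {f : ℝ → ℝ}

lemma isGreatest_argmaxOn (hs : s.Finite) (hne : s.Nonempty) :
    IsGreatest {u | u ∈ s ∧ ∀ v ∈ s, f v ≤ f u} (argmaxOn s f) := by
  have hfin : {u | u ∈ s ∧ ∀ v ∈ s, f v ≤ f u}.Finite := hs.subset fun _ hu => hu.1
  obtain ⟨u, hu, hmax⟩ := Set.exists_max_image s f hs hne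
  exact ⟨Nonempty.csSup_mem ⟨u, hu, hmax⟩ hfin, fun _ hv => le_csSup hfin.bddAbove hv⟩

lemma argmaxOn_mem (hs : s.Finite) (hne : s.Nonempty) : argmaxOn s f ∈ s :=
  (isGreatest_argmaxOn hs hne).1.1

lemma argmaxOn_congr {g : ℝ → ℝ} (hfg : EqOn f g s) : argmaxOn s f = argmaxOn s g := by
  unfold argmaxOn
  congr 1
  ext u
  constructor <;> rintro ⟨hu, hmax⟩ <;> refine ⟨hu, fun v hv => ?_⟩
  · rw [← hfg hu, ← hfg hv]; exact hmax v hv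
  · rw [hfg hu, hfg hv]; exact hmax v hv

lemma argmaxOn_image (hs : s.Finite) (hne : s.Nonempty) {φ : ℝ → ℝ} (hφ : MonotoneOn φ s) :
    argmaxOn (φ '' s) f = φ (argmaxOn s (f ∘ φ)) := by
  have hmaximizers : {u | u ∈ φ '' s ∧ ∀ v ∈ φ '' s, f v ≤ f u}
      = φ '' {k | k ∈ s ∧ ∀ l ∈ s, (f ∘ φ) l ≤ (f ∘ φ) k} := by
    ext u
    constructor
    · rintro ⟨⟨k, hk, rfl⟩, hmax⟩
      exact ⟨k, ⟨hk, fun l hl => hmax _ (mem_image_of_mem φ hl)⟩, rfl⟩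
    · rintro ⟨k, ⟨hk, hmax⟩, rfl⟩
      exact ⟨mem_image_of_mem φ hk, by rintro _ ⟨l, hl, rfl⟩; exact hmax l hl⟩
  have hgreatest := isGreatest_argmaxOn (f := f ∘ φ) hs hne
  unfold argmaxOn
  rw [hmaximizers, ((hφ.mono fun _ hk => hk.1).map_isGreatest hgreatest).csSup_eq]
  rfl

end ArgmaxOn

lemma grid_eq_image (K : ℕ) : grid K = (fun k : ℕ => (k : ℝ) / K) '' Iic K := by
  ext u
  simp only [grid, mem_ofPred_eq, mem_image, mem_Iic, eq_comm]

lemma grid_finite (K : ℕ) : (grid K).Finite := by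
  rw [grid_eq_image]
  exact (finite_Iic K).image _

lemma zero_mem_grid (K : ℕ) : (0 : ℝ) ∈ grid K := ⟨0, K.zero_le, by simp⟩

lemma grid_subset_Icc (K : ℕ) : grid K ⊆ Icc 0 1 := by
  rintro _ ⟨k, hk, rfl⟩
  exact ⟨by positivity, div_le_one_of_le₀ (by exact_mod_cast hk) K.cast_nonneg⟩

-- For `K = 0` both sides vanish, because `x / 0 = 0`.
lemma floor_mul_div_of_mem_grid {K : ℕ} {u : ℝ} (hu : u ∈ grid K) :
    (⌊(K : ℝ) * u⌋ : ℝ) / K = u := by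
  obtain ⟨k, -, rfl⟩ := hu
  rcases K.eq_zero_or_pos with rfl | hK
  · simp
  · rw [mul_div_cancel₀ _ (by positivity), Int.floor_natCast, Int.cast_natCast]

lemma tilF_of_mem_grid {N K : ℕ} {X : ℕ → ℝ} {u : ℝ} (hu : u ∈ grid K) :
    tilF N K X u = empCDF N X u := by
  rw [tilF, floor_mul_div_of_mem_grid hu]

lemma LamStep_of_mem_grid {N K : ℕ} {X Y : ℕ → ℝ} {u : ℝ} (hu : u ∈ grid K) :
    LamStep N K X Y u = empLam N X Y u := by
  rw [LamStep, floor_mul_div_of_mem_grid hu]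

lemma ite_le_one_zero_mono {t x y : ℝ} (hxy : x ≤ y) :
    (if t ≤ x then (1 : ℝ) else 0) ≤ if t ≤ y then 1 else 0 := by
  split_ifs with hx hy <;> first | exact absurd (hx.trans hxy) hy | norm_num

lemma empCDF_mono (N : ℕ) (X : ℕ → ℝ) : Monotone (empCDF N X) := by
  intro x y hxy
  unfold empCDF
  gcongr with i
  exact ite_le_one_zero_mono hxy

lemma empCDF_lt_of_mem_Ioc {N : ℕ} {X : ℕ → ℝ} {x y : ℝ} {i : ℕ} (hi : i < N)
    (hXi : X i ∈ Ioc x y) : empCDF N X x < empCDF N X y := by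
  have hxy : x ≤ y := hXi.1.le.trans hXi.2
  refine mul_lt_mul_of_pos_left (Finset.sum_lt_sum (fun j _ => ite_le_one_zero_mono hxy)
    ⟨i, Finset.mem_range.mpr hi, ?_⟩) (inv_pos.mpr (by exact_mod_cast (Nat.zero_le i).trans_lt hi))
  simp [not_le.mpr hXi.1, hXi.2]

lemma tilFinv_empCDF_of_mem_grid {N K : ℕ} {X : ℕ → ℝ}
    (hbins : ∀ k : ℕ, 1 ≤ k → k ≤ K → ∃ i < N, ((k : ℝ) - 1) / K < X i ∧ X i ≤ (k : ℝ) / K)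
    {u : ℝ} (hu : u ∈ grid K) : tilFinv N K X (empCDF N X u) = u := by
  refine IsLeast.csInf_eq ⟨⟨grid_subset_Icc K hu, (tilF_of_mem_grid hu).ge⟩, ?_⟩
  rintro x ⟨⟨hx0, -⟩, hFx⟩
  obtain ⟨k, hk, rfl⟩ := hu
  by_contra! hlt
  have hk1 : 1 ≤ k := Nat.one_le_iff_ne_zero.mpr (by rintro rfl; rw [Nat.cast_zero, zero_div] at hlt; linarith)
  have hK : (0 : ℝ) < K := Nat.cast_pos.mpr (by omega)
  have hfloor : (⌊(K : ℝ) * x⌋ : ℝ) ≤ (k : ℝ) - 1 := by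
    have : ⌊(K : ℝ) * x⌋ < (k : ℤ) := Int.floor_lt.mpr (by push_cast; rwa [lt_div_iff₀' hK] at hlt)
    exact_mod_cast Int.le_sub_one_of_lt this
  obtain ⟨i, hi, hXi⟩ := hbins k hk1 hk
  have hjump := empCDF_lt_of_mem_Ioc hi hXi
  have hstep : tilF N K X x ≤ empCDF N X (((k : ℝ) - 1) / K) :=
    empCDF_mono N X (div_le_div_of_nonneg_right hfloor K.cast_nonneg)
  linarith

lemma setOf_tilF_grid_eq_image (N K : ℕ) (X : ℕ → ℝ) :
    {u | ∃ k : ℕ, k ≤ K ∧ u = tilF N K X ((k : ℝ) / K)} = empCDF N X '' grid K := by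
  ext u
  constructor
  · rintro ⟨k, hk, rfl⟩
    exact ⟨_, ⟨k, hk, rfl⟩, (tilF_of_mem_grid ⟨k, hk, rfl⟩).symm⟩
  · rintro ⟨_, ⟨k, hk, rfl⟩, rfl⟩
    exact ⟨k, hk, (tilF_of_mem_grid ⟨k, hk, rfl⟩).symm⟩

theorem statement12_general
    (N K : ℕ) (X Y : ℕ → ℝ)
    (hbins : ∀ k : ℕ, 1 ≤ k → k ≤ K → ∃ i < N, ((k : ℝ) - 1) / K < X i ∧ X i ≤ (k : ℝ) / K) :
    ∀ a : ℝ, UN N K X Y a = tilFinv N K X (VN N K X Y a) := by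
  intro a
  have hVN : VN N K X Y a = empCDF N X (UN N K X Y a) := by
    rw [VN, setOf_tilF_grid_eq_image, argmaxOn_image (grid_finite K) ⟨0, zero_mem_grid K⟩
      ((empCDF_mono N X).monotoneOn _), UN]
    congr 1
    refine argmaxOn_congr fun u hu => ?_
    simp only [Function.comp_apply, tilFinv_empCDF_of_mem_grid hbins hu, LamStep_of_mem_grid hu]
  rw [hVN]
  exact (tilFinv_empCDF_of_mem_grid hbins (argmaxOn_mem (grid_finite K) ⟨0, zero_mem_grid K⟩)).symm

/-- `U_N(a) = F̃_N⁻¹(V_N(a))` for every `a ∈ ℝ`.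
(As in the paper, every bin is assumed to contain at least one observation, so that
`F̃_N⁻¹ ∘ F̃_N` is the identity on the grid; the paper works on the almost-sure event where
the covariates are distinct and invokes this identity, which requires the jumps of `F̃_N`.) -/
theorem statement12
    (N K : ℕ) (hK : 0 < K) (X Y : ℕ → ℝ)
    (hbins : ∀ k : ℕ, 1 ≤ k → k ≤ K → ∃ i < N, ((k : ℝ) - 1) / K < X i ∧ X i ≤ (k : ℝ) / K) :
    ∀ a : ℝ, UN N K X Y a = tilFinv N K X (VN N K X Y a) :=
  statement12_general N K X Y hbins
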